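/- Lipschitz equi-continuity of the threshold functions: for every k ≥ 1 and all y, z ∈ [0,1], one has |g_k(y) − g_k(z)| ≤ |y − z|. -/

import Mathlib

open MeasureTheory Set Filter

/-- The value functions of the optimal online alternating-subsequence selection
problem: `v 0 y = 0` and
`v (k+1) y = y * v k y + ∫ x in y..1, max (v k y) (1 + v k (1 - x))`. -/
noncomputable def v : ℕ → ℝ → ℝ
  | 0, _ => 0
  | (k+1), y => y * v k y + ∫ x in y..(1:ℝ), max (v k y) (1 + v k (1 - x))

/-- The optimal threshold function:
`g k y = inf {x ∈ [y,1] : v (k-1) y ≤ 1 + v (k-1) (1-x)}`. -/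
noncomputable def g (k : ℕ) (y : ℝ) : ℝ :=
  sInf {x : ℝ | x ∈ Set.Icc y 1 ∧ v (k-1) y ≤ 1 + v (k-1) (1 - x)}

/-- The minimal fixed point `ξ k = inf {y ∈ [0,1] : g k y = y}`. -/
noncomputable def xi (k : ℕ) : ℝ :=
  sInf {y : ℝ | y ∈ Set.Icc (0:ℝ) 1 ∧ g k y = y}

open intervalIntegral

lemma v_succ (k : ℕ) (y : ℝ) :
    v (k+1) y = y * v k y + ∫ x in y..(1:ℝ), max (v k y) (1 + v k (1 - x)) := rfl

lemma v_zero (y : ℝ) : v 0 y = 0 := rfl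

lemma v_one (y : ℝ) : v 1 y = 1 - y := by
  rw [v_succ]; simp [v_zero]

lemma v_two (y : ℝ) (hy : 0 ≤ y) : v 2 y = 3/2 - 3/2 * y^2 := by
  rw [v_succ]
  simp only [v_one]
  have h1 : ∀ x ∈ Set.uIcc y 1, max (1-y) (1 + (1 - (1-x))) = 1 + x := by
    intro x hx
    have hx1 : min y 1 ≤ x := (Set.mem_uIcc.mp hx).elim (fun h => le_trans (min_le_left _ _) h.1)
      (fun h => le_trans (min_le_right _ _) h.1)
    have hxy : -y ≤ x := by
      rcases le_total y 1 with h | h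
      · rw [min_eq_left h] at hx1; linarith
      · rw [min_eq_right h] at hx1; linarith
    rw [max_eq_right (by linarith)]
    ring
  rw [intervalIntegral.integral_congr h1]
  have : (∫ x in y..(1:ℝ), (1 + x)) = (1 - y) + (1^2 - y^2)/2 := by
    rw [intervalIntegral.integral_add (intervalIntegrable_const) intervalIntegral.intervalIntegrable_id]
    rw [integral_id]; simp
  rw [this]; ring

noncomputable def stp (w : ℝ → ℝ) (y : ℝ) : ℝ :=
  y * w y + ∫ x in y..(1:ℝ), max (w y) (1 + w (1 - x))

lemma v_stp (k : ℕ) : v (k+1) = stp (v k) := rfl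

def Anti (w : ℝ → ℝ) : Prop := ∀ a b : ℝ, 0 ≤ a → a ≤ b → b ≤ 1 → w b ≤ w a

lemma integral_le_const {f : ℝ → ℝ} {a b M : ℝ} (hab : a ≤ b)
    (hf : IntervalIntegrable f volume a b) (h : ∀ x ∈ Set.Icc a b, f x ≤ M) :
    (∫ x in a..b, f x) ≤ (b-a) * M := by
  calc (∫ x in a..b, f x) ≤ ∫ _x in a..b, M :=
        intervalIntegral.integral_mono_on hab hf intervalIntegrable_const h
  _ = (b-a) * M := by rw [intervalIntegral.integral_const, smul_eq_mul]

lemma const_le_integral {f : ℝ → ℝ} {a b M : ℝ} (hab : a ≤ b)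
    (hf : IntervalIntegrable f volume a b) (h : ∀ x ∈ Set.Icc a b, M ≤ f x) :
    (b-a) * M ≤ ∫ x in a..b, f x := by
  calc (b-a) * M = ∫ _x in a..b, M := by rw [intervalIntegral.integral_const, smul_eq_mul]
  _ ≤ ∫ x in a..b, f x :=
        intervalIntegral.integral_mono_on hab intervalIntegrable_const hf h

section prop

variable {w : ℝ → ℝ}

lemma phi_int (hanti : Anti w) (c : ℝ) {a b : ℝ} (ha : 0 ≤ a) (hab : a ≤ b) (hb : b ≤ 1) :
    IntervalIntegrable (fun x => max c (1 + w (1-x))) volume a b := by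
  apply MonotoneOn.intervalIntegrable
  rw [Set.uIcc_of_le hab]
  intro x hx y hy hxy
  exact max_le_max le_rfl (add_le_add_right
    (hanti (1-y) (1-x) (by linarith [hy.2]) (by linarith) (by linarith [hx.1])) 1)

lemma gap_eq (hanti : Anti w) {a b : ℝ} (ha : 0 ≤ a) (hab : a ≤ b) (hb : b ≤ 1) :
    stp w a - stp w b = (a * w a - b * w b)
      + (∫ x in a..b, max (w a) (1 + w (1-x)))
      + ∫ x in b..1, (max (w a) (1 + w (1-x)) - max (w b) (1 + w (1-x))) := by
  have h1 : (∫ x in a..(1:ℝ), max (w a) (1 + w (1-x)))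
      = (∫ x in a..b, max (w a) (1 + w (1-x))) + ∫ x in b..(1:ℝ), max (w a) (1 + w (1-x)) :=
    (intervalIntegral.integral_add_adjacent_intervals
      (phi_int hanti _ ha hab hb) (phi_int hanti _ (ha.trans hab) hb le_rfl)).symm
  have h2 : (∫ x in b..(1:ℝ), (max (w a) (1 + w (1-x)) - max (w b) (1 + w (1-x))))
      = (∫ x in b..(1:ℝ), max (w a) (1 + w (1-x))) - ∫ x in b..(1:ℝ), max (w b) (1 + w (1-x)) :=
    intervalIntegral.integral_sub (phi_int hanti _ (ha.trans hab) hb le_rfl)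
      (phi_int hanti _ (ha.trans hab) hb le_rfl)
  rw [stp, stp, h1, h2]; ring

lemma stp_anti (hanti : Anti w) : Anti (stp w) := by
  intro a b ha hab hb
  have key : 0 ≤ stp w a - stp w b := by
    rw [gap_eq hanti ha hab hb]
    have hwab : w b ≤ w a := hanti a b ha hab hb
    have t2 : ((b-a) * w a) ≤ ∫ x in a..b, max (w a) (1 + w (1-x)) :=
      const_le_integral hab (phi_int hanti _ ha hab hb) (fun x _ => le_max_left _ _)
    have t3 : (0:ℝ) ≤ ∫ x in b..1, (max (w a) (1 + w (1-x)) - max (w b) (1 + w (1-x))) := by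
      apply intervalIntegral.integral_nonneg hb
      intro x _
      simp only [sub_nonneg]
      exact max_le_max hwab le_rfl
    nlinarith [t2, t3]
  linarith

lemma stp_rate (hanti : Anti w) {a b : ℝ} (ha : 1/2 ≤ a) (hab : a ≤ b) (hb : b ≤ 1) :
    b - a ≤ stp w a - stp w b := by
  have ha0 : (0:ℝ) ≤ a := by linarith
  rw [gap_eq hanti ha0 hab hb]
  have hwab : w b ≤ w a := hanti a b ha0 hab hb
  have t2 : ((b-a) * (1 + w a)) ≤ ∫ x in a..b, max (w a) (1 + w (1-x)) := by
    apply const_le_integral hab (phi_int hanti _ ha0 hab hb)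
    intro x hx
    have h1 : w a ≤ w (1-x) :=
      hanti (1-x) a (by linarith [hx.2]) (by linarith [hx.1]) (by linarith)
    calc 1 + w a ≤ 1 + w (1-x) := by linarith
    _ ≤ _ := le_max_right _ _
  have t3 : (0:ℝ) ≤ ∫ x in b..1, (max (w a) (1 + w (1-x)) - max (w b) (1 + w (1-x))) := by
    apply intervalIntegral.integral_nonneg hb
    intro x _
    simp only [sub_nonneg]
    exact max_le_max hwab le_rfl
  nlinarith [t2, t3]

lemma stp_cap (hanti : Anti w) (hcap : w 0 - w (1/2) ≤ 1) :
    stp w 0 - stp w (1/2) ≤ 1 := by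
  rw [gap_eq hanti le_rfl (by norm_num) (by norm_num)]
  have t2 : (∫ x in (0:ℝ)..(1/2:ℝ), max (w 0) (1 + w (1-x)))
      ≤ (1/2 - 0) * max (w 0) (1 + w (1/2)) := by
    apply integral_le_const (by norm_num) (phi_int hanti _ le_rfl (by norm_num) (by norm_num))
    intro x hx
    apply max_le_max le_rfl
    have : w (1-x) ≤ w (1/2) :=
      hanti (1/2) (1-x) (by norm_num) (by linarith [hx.2]) (by linarith [hx.1])
    linarith
  have t3 : (∫ x in (1/2:ℝ)..1,
      (max (w 0) (1 + w (1-x)) - max (w (1/2)) (1 + w (1-x)))) = 0 := by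
    rw [intervalIntegral.integral_congr (g := fun _ => (0:ℝ))]
    · simp
    · intro x hx
      rw [Set.uIcc_of_le (by norm_num : (1/2:ℝ) ≤ 1)] at hx
      have h1 : w (1/2) ≤ w (1-x) :=
        hanti (1-x) (1/2) (by linarith [hx.2]) (by linarith [hx.1]) (by norm_num)
      have h2 : w 0 ≤ 1 + w (1-x) := by linarith
      have h3 : w (1/2) ≤ 1 + w (1-x) := by
        have : w (1-x) ≤ w 0 := hanti 0 (1-x) le_rfl (by linarith [hx.2]) (by linarith [hx.1])
        linarith
      simp only [max_eq_right h2, max_eq_right h3, sub_self]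
  rw [t3]
  have hm : max (w 0) (1 + w (1/2)) - w (1/2) ≤ 1 := by
    rcases max_cases (w 0) (1 + w (1/2)) with ⟨h, _⟩ | ⟨h, _⟩ <;> rw [h] <;> linarith
  nlinarith [t2, hm]


lemma stp_xcap (hanti : Anti w) (hx : w (1/3) - w (2/3) ≤ 1) :
    stp w (1/3) - stp w (2/3) ≤ 1 := by
  have h13 : (0:ℝ) ≤ 1/3 := by norm_num
  have h23 : (1/3:ℝ) ≤ 2/3 := by norm_num
  have h231 : (2/3:ℝ) ≤ 1 := by norm_num
  rw [gap_eq hanti h13 h23 h231]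
  set p := w (1/3) with hp
  set q := w (1/2) with hq
  set r := w (2/3) with hr
  have hqp : q ≤ p := hanti (1/3) (1/2) h13 (by norm_num) (by norm_num)
  have hrq : r ≤ q := hanti (1/2) (2/3) (by norm_num) (by norm_num) h231
  -- T2 split
  have hsplit : (∫ x in (1/3:ℝ)..(2/3:ℝ), max p (1 + w (1-x)))
      = (∫ x in (1/3:ℝ)..(1/2:ℝ), max p (1 + w (1-x)))
      + ∫ x in (1/2:ℝ)..(2/3:ℝ), max p (1 + w (1-x)) :=
    (intervalIntegral.integral_add_adjacent_intervals
      (phi_int hanti _ h13 (by norm_num) (by norm_num))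
      (phi_int hanti _ (by norm_num) (by norm_num) h231)).symm
  have t2a : (∫ x in (1/3:ℝ)..(1/2:ℝ), max p (1 + w (1-x)))
      ≤ (1/2 - 1/3) * max p (1 + q) := by
    apply integral_le_const (by norm_num) (phi_int hanti _ h13 (by norm_num) (by norm_num))
    intro x hx'
    apply max_le_max le_rfl
    have : w (1-x) ≤ q :=
      hanti (1/2) (1-x) (by norm_num) (by linarith [hx'.2]) (by linarith [hx'.1])
    linarith
  have t2b : (∫ x in (1/2:ℝ)..(2/3:ℝ), max p (1 + w (1-x)))
      ≤ (2/3 - 1/2) * (1 + p) := by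
    apply integral_le_const (by norm_num) (phi_int hanti _ (by norm_num) (by norm_num) h231)
    intro x hx'
    have : w (1-x) ≤ p :=
      hanti (1/3) (1-x) h13 (by linarith [hx'.2]) (by linarith [hx'.1])
    exact max_le (by linarith) (by linarith)
  have t3 : (∫ x in (2/3:ℝ)..1,
      (max p (1 + w (1-x)) - max r (1 + w (1-x)))) = 0 := by
    rw [intervalIntegral.integral_congr (g := fun _ => (0:ℝ))]
    · simp
    · intro x hx'
      rw [Set.uIcc_of_le h231] at hx'
      have h1 : p ≤ w (1-x) :=
        hanti (1-x) (1/3) (by linarith [hx'.2]) (by linarith [hx'.1]) (by norm_num)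
      have h2 : p ≤ 1 + w (1-x) := by linarith
      have h3 : r ≤ 1 + w (1-x) := by linarith
      simp only [max_eq_right h2, max_eq_right h3, sub_self]
  rw [t3, hsplit]
  rcases max_cases p (1 + q) with ⟨hm, hside⟩ | ⟨hm, hside⟩ <;> rw [hm] at t2a <;>
    nlinarith [t2a, t2b, hqp, hrq, hx]

lemma stp_ylow (hanti : Anti w)
    (hrate : ∀ a b : ℝ, 1/2 ≤ a → a ≤ b → b ≤ 1 → b - a ≤ w a - w b)
    (hy : 1/2 ≤ w (1/3) - w (2/3)) :
    1/2 ≤ stp w (1/3) - stp w (2/3) := by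
  have h13 : (0:ℝ) ≤ 1/3 := by norm_num
  have h23 : (1/3:ℝ) ≤ 2/3 := by norm_num
  have h231 : (2/3:ℝ) ≤ 1 := by norm_num
  rw [gap_eq hanti h13 h23 h231]
  set p := w (1/3) with hp
  set q := w (1/2) with hq
  set r := w (2/3) with hr
  have hqr : r + 1/6 ≤ q := by
    have := hrate (1/2) (2/3) le_rfl (by norm_num) h231
    linarith
  have hsplit : (∫ x in (1/3:ℝ)..(2/3:ℝ), max p (1 + w (1-x)))
      = (∫ x in (1/3:ℝ)..(1/2:ℝ), max p (1 + w (1-x)))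
      + ∫ x in (1/2:ℝ)..(2/3:ℝ), max p (1 + w (1-x)) :=
    (intervalIntegral.integral_add_adjacent_intervals
      (phi_int hanti _ h13 (by norm_num) (by norm_num))
      (phi_int hanti _ (by norm_num) (by norm_num) h231)).symm
  have lin_int : IntervalIntegrable (fun x : ℝ => 1 + r + (x - 1/3)) volume (1/3) (1/2) :=
    (continuous_const.add (continuous_id.sub continuous_const)).intervalIntegrable _ _
  have t2a : (∫ x in (1/3:ℝ)..(1/2:ℝ), (1 + r + (x - 1/3)))
      ≤ ∫ x in (1/3:ℝ)..(1/2:ℝ), max p (1 + w (1-x)) := by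
    apply intervalIntegral.integral_mono_on (by norm_num) lin_int
      (phi_int hanti _ h13 (by norm_num) (by norm_num))
    intro x hx'
    have h1 : (2/3 : ℝ) - (1-x) ≤ w (1-x) - r :=
      hrate (1-x) (2/3) (by linarith [hx'.2]) (by linarith [hx'.1]) (by linarith [hx'.1])
    have : 1 + r + (x - 1/3) ≤ 1 + w (1-x) := by linarith
    exact this.trans (le_max_right _ _)
  have t2a' : (∫ x in (1/3:ℝ)..(1/2:ℝ), (1 + r + (x - 1/3)))
      = (1/2 - 1/3) * (1 + r - 1/3) + ((1/2)^2 - (1/3)^2)/2 := by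
    have : (fun x : ℝ => 1 + r + (x - 1/3)) = fun x : ℝ => (1 + r - 1/3) + x := by
      funext x; ring
    rw [this, intervalIntegral.integral_add intervalIntegrable_const
      intervalIntegral.intervalIntegrable_id, integral_id, intervalIntegral.integral_const,
      smul_eq_mul]
    try ring
  have t2b : ((2/3 - 1/2) * (1 + (r + 1/6)) : ℝ)
      ≤ ∫ x in (1/2:ℝ)..(2/3:ℝ), max p (1 + w (1-x)) := by
    apply const_le_integral (by norm_num) (phi_int hanti _ (by norm_num) (by norm_num) h231)
    intro x hx'
    have h1 : q ≤ w (1-x) :=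
      hanti (1-x) (1/2) (by linarith [hx'.2]) (by linarith [hx'.1]) (by norm_num)
    have : 1 + (r + 1/6) ≤ 1 + w (1-x) := by linarith
    exact this.trans (le_max_right _ _)
  have t3 : (0:ℝ) ≤ ∫ x in (2/3:ℝ)..1,
      (max p (1 + w (1-x)) - max r (1 + w (1-x))) := by
    apply intervalIntegral.integral_nonneg h231
    intro x _
    simp only [sub_nonneg]
    exact max_le_max (hanti (1/3) (2/3) h13 h23 h231) le_rfl
  rw [hsplit]
  nlinarith [t2a, t2a', t2b, t3, hy]

lemma stp_lip (hanti : Anti w)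
    (hlip : ∀ a b : ℝ, 0 ≤ a → a ≤ b → b ≤ 1/3 → w a - w b ≤ b - a)
    (hcap : w 0 - w (1/2) ≤ 1)
    (hy : 1/2 ≤ w (1/3) - w (2/3))
    {a b : ℝ} (ha : 0 ≤ a) (hab : a ≤ b) (hb : b ≤ 1/3) :
    stp w a - stp w b ≤ b - a := by
  have hb1 : b ≤ 1 := by linarith
  rw [gap_eq hanti ha hab hb1]
  have hwab : w b ≤ w a := hanti a b ha hab hb1
  have hDelta : w a - w b ≤ b - a := hlip a b ha hab hb
  -- T2 bound
  have t2 : (∫ x in a..b, max (w a) (1 + w (1-x)))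
      ≤ (b - a) * max (w a) (1 + w (1-b)) := by
    apply integral_le_const hab (phi_int hanti _ ha hab hb1)
    intro x hx'
    apply max_le_max le_rfl
    have : w (1-x) ≤ w (1-b) :=
      hanti (1-b) (1-x) (by linarith) (by linarith [hx'.2]) (by linarith [hx'.1])
    linarith
  -- T3 split
  have hsplit : (∫ x in b..(1:ℝ), (max (w a) (1 + w (1-x)) - max (w b) (1 + w (1-x))))
      = (∫ x in b..(1/2:ℝ), (max (w a) (1 + w (1-x)) - max (w b) (1 + w (1-x))))
      + ∫ x in (1/2:ℝ)..(1:ℝ), (max (w a) (1 + w (1-x)) - max (w b) (1 + w (1-x))) :=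
    (intervalIntegral.integral_add_adjacent_intervals
      ((phi_int hanti _ (ha.trans hab) (by linarith) (by norm_num)).sub
        (phi_int hanti _ (ha.trans hab) (by linarith) (by norm_num)))
      ((phi_int hanti _ (by norm_num) (by norm_num) le_rfl).sub
        (phi_int hanti _ (by norm_num) (by norm_num) le_rfl))).symm
  have t3b : (∫ x in (1/2:ℝ)..(1:ℝ),
      (max (w a) (1 + w (1-x)) - max (w b) (1 + w (1-x)))) = 0 := by
    rw [intervalIntegral.integral_congr (g := fun _ => (0:ℝ))]
    · simp
    · intro x hx'
      rw [Set.uIcc_of_le (by norm_num : (1/2:ℝ) ≤ 1)] at hx'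
      have h1 : w (1/2) ≤ w (1-x) :=
        hanti (1-x) (1/2) (by linarith [hx'.2]) (by linarith [hx'.1]) (by norm_num)
      have hwa0 : w a ≤ w 0 := hanti 0 a le_rfl ha (by linarith)
      have hwb0 : w b ≤ w 0 := hanti 0 b le_rfl (ha.trans hab) hb1
      have h2 : w a ≤ 1 + w (1-x) := by linarith
      have h3 : w b ≤ 1 + w (1-x) := by linarith
      simp only [max_eq_right h2, max_eq_right h3, sub_self]
  have t3a : (∫ x in b..(1/2:ℝ), (max (w a) (1 + w (1-x)) - max (w b) (1 + w (1-x))))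
      ≤ (1/2 - b) * (w a - w b) := by
    apply integral_le_const (by linarith)
      ((phi_int hanti _ (ha.trans hab) (by linarith) (by norm_num)).sub
        (phi_int hanti _ (ha.trans hab) (by linarith) (by norm_num)))
    intro x _
    have : max (w a) (1 + w (1-x)) ≤ (w a - w b) + max (w b) (1 + w (1-x)) :=
      max_le (by linarith [le_max_left (w b) (1 + w (1-x))])
        (by linarith [le_max_right (w b) (1 + w (1-x))])
    linarith
  -- the max bound
  have hD : 1 + w (1-b) - w b ≤ 1/2 := by
    have h1 : w (1-b) ≤ w (2/3) :=
      hanti (2/3) (1-b) (by norm_num) (by linarith) (by linarith)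
    have h2 : w (1/3) ≤ w b := hanti b (1/3) (ha.trans hab) hb (by norm_num)
    linarith
  have hM : max (w a) (1 + w (1-b)) - w b ≤ 1/2 := by
    rcases max_cases (w a) (1 + w (1-b)) with ⟨hm, _⟩ | ⟨hm, _⟩ <;> rw [hm]
    · calc w a - w b ≤ b - a := hDelta
      _ ≤ 1/3 := by linarith
      _ ≤ 1/2 := by norm_num
    · linarith
  have hMlb : w b ≤ max (w a) (1 + w (1-b)) := le_trans hwab (le_max_left _ _)
  rw [hsplit, t3b]
  nlinarith [t2, t3a, hM, hDelta, hwab, hMlb]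

end prop


structure Pack (w : ℝ → ℝ) : Prop where
  anti : Anti w
  lip : ∀ a b : ℝ, 0 ≤ a → a ≤ b → b ≤ 1/3 → w a - w b ≤ b - a
  rate : ∀ a b : ℝ, 1/2 ≤ a → a ≤ b → b ≤ 1 → b - a ≤ w a - w b
  cap : w 0 - w (1/2) ≤ 1
  xcap : w (1/3) - w (2/3) ≤ 1
  ylow : 1/2 ≤ w (1/3) - w (2/3)

lemma pack_two : Pack (v 2) := by
  constructor
  · intro a b ha hab hb
    rw [v_two a ha, v_two b (ha.trans hab)]; nlinarith
  · intro a b ha hab hb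
    rw [v_two a ha, v_two b (ha.trans hab)]; nlinarith
  · intro a b ha hab hb
    rw [v_two a (by linarith), v_two b (by linarith)]; nlinarith
  · rw [v_two 0 le_rfl, v_two (1/2) (by norm_num)]; norm_num
  · rw [v_two (1/3) (by norm_num), v_two (2/3) (by norm_num)]; norm_num
  · rw [v_two (1/3) (by norm_num), v_two (2/3) (by norm_num)]; norm_num

lemma pack_step {w : ℝ → ℝ} (hw : Pack w) : Pack (stp w) :=
  ⟨stp_anti hw.anti,
   fun _ _ ha hab hb => stp_lip hw.anti hw.lip hw.cap hw.ylow ha hab hb,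
   fun _ _ ha hab hb => stp_rate hw.anti ha hab hb,
   stp_cap hw.anti hw.cap,
   stp_xcap hw.anti hw.xcap,
   stp_ylow hw.anti hw.rate hw.ylow⟩

lemma pack_v (k : ℕ) (hk : 2 ≤ k) : Pack (v k) := by
  induction k with
  | zero => omega
  | succ n ih =>
    rcases Nat.lt_or_ge n 2 with h | h
    · interval_cases n
      · omega
      · exact pack_two
    · rw [v_stp n]
      exact pack_step (ih h)

section gsec
variable {w : ℝ → ℝ}

def lset (w : ℝ → ℝ) (y : ℝ) : Set ℝ := {u | u ∈ Set.Icc (0:ℝ) 1 ∧ w y - 1 ≤ w u}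
noncomputable def lfun (w : ℝ → ℝ) (y : ℝ) : ℝ := sSup (lset w y)
def gset (w : ℝ → ℝ) (y : ℝ) : Set ℝ := {x | x ∈ Set.Icc y 1 ∧ w y ≤ 1 + w (1-x)}

lemma lset_mem_self {y : ℝ} (hy : y ∈ Set.Icc (0:ℝ) 1) : y ∈ lset w y :=
  ⟨hy, by linarith⟩

lemma lset_bdd (y : ℝ) : BddAbove (lset w y) := ⟨1, fun _ hu => hu.1.2⟩

lemma lfun_ge {y : ℝ} (hy : y ∈ Set.Icc (0:ℝ) 1) : y ≤ lfun w y :=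
  le_csSup (lset_bdd y) (lset_mem_self hy)

lemma lfun_le_one {y : ℝ} (hy : y ∈ Set.Icc (0:ℝ) 1) : lfun w y ≤ 1 :=
  csSup_le ⟨y, lset_mem_self hy⟩ (fun _ hu => hu.1.2)

lemma lfun_mono (hanti : Anti w) {y z : ℝ} (hy : 0 ≤ y) (hyz : y ≤ z) (hz : z ≤ 1) :
    lfun w y ≤ lfun w z := by
  apply csSup_le_csSup (lset_bdd z) ⟨y, lset_mem_self ⟨hy, hyz.trans hz⟩⟩
  intro u hu
  exact ⟨hu.1, le_trans (by linarith [hanti y z hy hyz hz]) hu.2⟩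

lemma gset_one_mem (hanti : Anti w) {y : ℝ} (hy : y ∈ Set.Icc (0:ℝ) 1) : (1:ℝ) ∈ gset w y := by
  refine ⟨⟨hy.2, le_rfl⟩, ?_⟩
  have : w y ≤ w 0 := hanti 0 y le_rfl hy.1 hy.2
  simp only [sub_self]
  linarith

lemma gset_bddBelow (y : ℝ) : BddBelow (gset w y) := ⟨y, fun _ hx => hx.1.1⟩

lemma ginf_eq (hanti : Anti w) {y : ℝ} (hy : y ∈ Set.Icc (0:ℝ) 1) :
    sInf (gset w y) = max y (1 - lfun w y) := by
  apply le_antisymm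
  · apply le_of_forall_pos_le_add
    intro ε hε
    rcases le_or_gt 1 (max y (1 - lfun w y) + ε) with h1 | h1
    · exact le_trans (csInf_le (gset_bddBelow y) (gset_one_mem hanti hy)) h1
    · set x := max y (1 - lfun w y) + ε with hx
      have hxy : y ≤ x := by
        have := le_max_left y (1 - lfun w y); linarith
      have hx1 : x ≤ 1 := le_of_lt h1
      have hlt : 1 - x < lfun w y := by
        have h2 : 1 - lfun w y ≤ max y (1 - lfun w y) := le_max_right _ _
        have : 1 - x ≤ lfun w y - ε := by linarith
        linarith
      obtain ⟨u, hu, hul⟩ := exists_lt_of_lt_csSup ⟨y, lset_mem_self hy⟩ hlt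
      have hcond : w y ≤ 1 + w (1-x) := by
        have h0x : 0 ≤ 1 - x := by linarith
        have : w u ≤ w (1-x) := hanti (1-x) u h0x (le_of_lt hul) hu.1.2
        have := hu.2
        linarith
      exact csInf_le (gset_bddBelow y) ⟨⟨hxy, hx1⟩, hcond⟩
  · apply le_csInf ⟨1, gset_one_mem hanti hy⟩
    intro x hx
    apply max_le hx.1.1
    have hmem : 1 - x ∈ lset w y := by
      refine ⟨⟨by linarith [hx.1.2], by linarith [hy.1, hx.1.1]⟩, by linarith [hx.2]⟩
    have h7 : 1 - x ≤ lfun w y := le_csSup (lset_bdd y) hmem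
    linarith

lemma lfun_key (hw : Pack w) {y z : ℝ} (hy : 0 ≤ y) (hyz : y ≤ z) (hz : z ≤ 1/3) :
    lfun w z ≤ lfun w y + (z - y) := by
  apply csSup_le ⟨z, lset_mem_self ⟨hy.trans hyz, by linarith⟩⟩
  intro u hu
  by_contra hcon
  push_neg at hcon
  have hu1 : u ≤ 1 := hu.1.2
  have hly : y ≤ lfun w y := lfun_ge ⟨hy, by linarith⟩
  have hut0 : 0 ≤ u - (z-y) := by linarith
  have hnot : u - (z-y) ∉ lset w y := by
    intro hmem
    have h7 : u - (z-y) ≤ lfun w y := le_csSup (lset_bdd y) hmem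
    linarith
  have h2 : w (u - (z-y)) < w y - 1 := by
    by_contra h
    push_neg at h
    exact hnot ⟨⟨hut0, by linarith⟩, h⟩
  have h3 : 1/2 < u - (z-y) := by
    by_contra h
    push_neg at h
    have ha : w (1/2) ≤ w (u - (z-y)) := hw.anti (u - (z-y)) (1/2) hut0 h (by norm_num)
    have hb : w y ≤ w 0 := hw.anti 0 y le_rfl hy (by linarith)
    have := hw.cap
    linarith
  have h4 : u - (u - (z-y)) ≤ w (u - (z-y)) - w u :=
    hw.rate (u - (z-y)) u (le_of_lt h3) (by linarith) hu1
  have h5 : w y - w z ≤ z - y := hw.lip y z hy hyz hz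
  have h6 : w z - 1 ≤ w u := hu.2
  linarith

lemma lfun_third (hw : Pack w) : 2/3 ≤ lfun w (1/3) := by
  apply le_csSup (lset_bdd _)
  exact ⟨⟨by norm_num, by norm_num⟩, by linarith [hw.xcap]⟩

lemma ginf_id (hw : Pack w) {y : ℝ} (hy : 1/3 ≤ y) (hy1 : y ≤ 1) :
    sInf (gset w y) = y := by
  have hy0 : (0:ℝ) ≤ y := by linarith
  apply le_antisymm
  · apply csInf_le (gset_bddBelow y)
    refine ⟨⟨le_rfl, hy1⟩, ?_⟩
    rcases le_or_gt y (1/2) with h | h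
    · have h1 : w y ≤ w (1/3) := hw.anti (1/3) y (by norm_num) hy hy1
      have h2 : w (2/3) ≤ w (1-y) := hw.anti (1-y) (2/3) (by linarith) (by linarith) (by norm_num)
      linarith [hw.xcap]
    · have h1 : w y ≤ w (1-y) := hw.anti (1-y) y (by linarith) (by linarith) hy1
      linarith
  · exact le_csInf ⟨1, gset_one_mem hw.anti ⟨hy0, hy1⟩⟩ (fun x hx => hx.1.1)

lemma g_lipschitz (hw : Pack w) {y z : ℝ} (hy : y ∈ Set.Icc (0:ℝ) 1)
    (hz : z ∈ Set.Icc (0:ℝ) 1) (hyz : y ≤ z) :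
    |sInf (gset w y) - sInf (gset w z)| ≤ z - y := by
  rcases le_or_gt (1/3) y with h13 | h13
  · -- both ≥ 1/3
    rw [ginf_id hw h13 hy.2, ginf_id hw (h13.trans hyz) hz.2]
    rw [abs_sub_comm, abs_of_nonneg (by linarith)]
  · rcases le_or_gt z (1/3) with hz13 | hz13
    · -- both ≤ 1/3
      rw [ginf_eq hw.anti hy, ginf_eq hw.anti hz]
      have hmono := lfun_mono hw.anti hy.1 hyz hz.2
      have hkey := lfun_key hw hy.1 hyz hz13
      rw [abs_le]
      constructor
      · -- g y - g z ≤ z - y i.e. -(z-y) ≤ g y - g z : g z ≤ g y + (z - y)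
        have : max z (1 - lfun w z) ≤ max y (1 - lfun w y) + (z - y) := by
          apply max_le
          · linarith [le_max_left y (1 - lfun w y)]
          · linarith [le_max_right y (1 - lfun w y)]
        linarith
      · -- g y ≤ g z + (z - y)
        have : max y (1 - lfun w y) ≤ max z (1 - lfun w z) + (z - y) := by
          apply max_le
          · linarith [le_max_left z (1 - lfun w z)]
          · linarith [le_max_right z (1 - lfun w z)]
        linarith
    · -- y < 1/3 < z
      rw [ginf_eq hw.anti hy, ginf_id hw (le_of_lt hz13) hz.2]
      have hkey := lfun_key hw hy.1 (le_of_lt h13) le_rfl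
      have hthird := lfun_third hw
      rw [abs_le]
      constructor
      · -- z ≤ max y (1 - lfun w y) + (z - y) : since max ≥ y
        linarith [le_max_left y (1 - lfun w y)]
      · -- max y (1 - lfun w y) ≤ z + (z - y)
        have h8 : 1/3 + y ≤ lfun w y := by linarith
        have h9 : max y (1 - lfun w y) ≤ 2*z - y := max_le (by linarith) (by linarith)
        linarith
end gsec

lemma g_one {y : ℝ} (hy : y ∈ Set.Icc (0:ℝ) 1) : g 1 y = y := by
  have hset : {x : ℝ | x ∈ Set.Icc y 1 ∧ v 0 y ≤ 1 + v 0 (1 - x)} = Set.Icc y 1 := by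
    ext x
    simp only [Set.mem_setOf_eq, v_zero, and_iff_left_iff_imp]
    intro _
    norm_num
  show sInf {x : ℝ | x ∈ Set.Icc y 1 ∧ v 0 y ≤ 1 + v 0 (1 - x)} = y
  rw [hset]
  exact csInf_Icc hy.2

lemma g_two {y : ℝ} (hy : y ∈ Set.Icc (0:ℝ) 1) : g 2 y = y := by
  have hset : {x : ℝ | x ∈ Set.Icc y 1 ∧ v 1 y ≤ 1 + v 1 (1 - x)} = Set.Icc y 1 := by
    ext x
    simp only [Set.mem_setOf_eq, v_one, and_iff_left_iff_imp]
    intro hx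
    have : y ≤ x := hx.1
    have : 0 ≤ y := hy.1
    linarith
  show sInf {x : ℝ | x ∈ Set.Icc y 1 ∧ v 1 y ≤ 1 + v 1 (1 - x)} = y
  rw [hset]
  exact csInf_Icc hy.2

/-- Lipschitz equi-continuity of the threshold functions:
`|g k y - g k z| ≤ |y - z|` for all `y, z ∈ [0,1]`. -/
theorem threshold_lipschitz :
    ∀ k : ℕ, 1 ≤ k → ∀ y ∈ Set.Icc (0:ℝ) 1, ∀ z ∈ Set.Icc (0:ℝ) 1,
      |g k y - g k z| ≤ |y - z| := by
  have H : ∀ k : ℕ, 1 ≤ k → ∀ y ∈ Set.Icc (0:ℝ) 1, ∀ z ∈ Set.Icc (0:ℝ) 1, y ≤ z →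
      |g k y - g k z| ≤ |y - z| := by
    intro k hk y hy z hz hyz
    have habs : |y - z| = z - y := by
      rw [abs_sub_comm, abs_of_nonneg (by linarith)]
    rw [habs]
    match k, hk with
    | 1, _ =>
      rw [g_one hy, g_one hz, abs_sub_comm, abs_of_nonneg (by linarith)]
    | 2, _ =>
      rw [g_two hy, g_two hz, abs_sub_comm, abs_of_nonneg (by linarith)]
    | (m+3), _ =>
      have hpack : Pack (v (m+2)) := pack_v (m+2) (by omega)
      have : g (m+3) y = sInf (gset (v (m+2)) y) := rfl
      rw [this]
      have : g (m+3) z = sInf (gset (v (m+2)) z) := rfl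
      rw [this]
      exact g_lipschitz hpack hy hz hyz
  intro k hk y hy z hz
  rcases le_total y z with hyz | hyz
  · exact H k hk y hy z hz hyz
  · rw [abs_sub_comm, abs_sub_comm y z]
    exact H k hk z hz y hy hyz
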